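/- arXiv:2503.17883 — 3 statements merged into one kernel-verified Lean document; each statement's English description precedes it below -/
import Mathlib

section
/- Let e ≥ 4 be an integer with t_e ≥ 1, let n ≥ b_e = k_e+2, write k = k_e and t = t_e, and let γ = ρ(D_{n,e}). Suppose y is an eigenvector of the adjacency matrix of D_{n,e} with eigenvalue γ all of whose entries are positive. Then y_2 = y_3 = ... = y_{t+1}, y_{t+2} = y_{t+3} = ... = y_{k+1}, y_{k+3} = y_{k+4} = ... = y_n, and: (γ+1)y_1 = y_1 + t·y_2 + (k-t)·y_{k+1} + y_{k+2} + (n-k-2)·y_n; (γ+1)y_2 = y_1 + t·y_2 + (k-t)·y_{k+1} + y_{k+2}; (γ+1)y_{k+1} = y_1 + t·y_2 + (k-t)·y_{k+1}; γ·y_{k+2} = y_1 + t·y_2; and, provided n > k+2, γ·y_n = y_1. Moreover, γ is the largest real root of the polynomial λ(λ+1)(λ³ - λ²(k-1) - λ(k+t+1) + (t+1)(k-t-1)) - (n-k-2)(λ³ - λ²(k-2) - λ(k+t-1) + t(k-t-1)). -/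
open Polynomial Matrix

attribute [local instance] Classical.propDecidable

/-- The spectral radius of a finite simple graph: the largest modulus of a (real)
eigenvalue of its adjacency matrix. -/
noncomputable def specRad {V : Type} [Fintype V] (G : SimpleGraph V) : ℝ :=
  sSup { r : ℝ | ∃ μ : ℝ, (∃ v : V → ℝ, v ≠ 0 ∧ (G.adjMatrix ℝ) *ᵥ v = μ • v) ∧ r = |μ| }

/-- The characteristic polynomial of the adjacency matrix of a graph. -/
noncomputable def gCharPoly {V : Type} [Fintype V] (G : SimpleGraph V) : Polynomial ℝ :=
  Matrix.charpoly (G.adjMatrix ℝ)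

/-- `G` is a connected graph with `n` vertices and `n - 1 + e` edges. -/
def memC (n e : ℕ) (G : SimpleGraph (Fin n)) : Prop :=
  G.Connected ∧ G.edgeSet.ncard = n - 1 + e

/-- `kk e` is the largest natural number `k` with `k * (k - 1) / 2 ≤ e`. -/
def kk (e : ℕ) : ℕ := Nat.findGreatest (fun k => k * (k - 1) ≤ 2 * e) (e + 2)

def tt (e : ℕ) : ℕ := e - kk e * (kk e - 1) / 2

def bb (e : ℕ) : ℕ := if e = 0 then 1 else if tt e = 0 then kk e + 1 else kk e + 2

/-- The graph `V_{n,e} = (K_{1,e} + (n-e-2)K_1) ∨ K_1` (vertices `0`-based: paper vertex `i`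
is `i - 1` here): vertex `0` is adjacent to all other vertices, vertex `1` is additionally
adjacent to vertices `2, …, e+1`, and there are no other edges. -/
def graphV (n e : ℕ) : SimpleGraph (Fin n) :=
  SimpleGraph.fromRel (fun i j => (i : ℕ) = 0 ∨ ((i : ℕ) = 1 ∧ 2 ≤ (j : ℕ) ∧ (j : ℕ) ≤ e + 1))

/-- The graph `D_{n,e}` (vertices `0`-based): vertex `0` is adjacent to all other vertices,
and for `1 ≤ i < j`, vertices `i` and `j` are adjacent iff `j ≤ kk e` or
(`j = kk e + 1` and `i ≤ tt e`).  For `n < kk e + 2` this is the complete graph. -/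
def graphD (n e : ℕ) : SimpleGraph (Fin n) :=
  SimpleGraph.fromRel (fun i j =>
    (i : ℕ) = 0 ∨ (1 ≤ (i : ℕ) ∧ (i : ℕ) < (j : ℕ) ∧
      ((j : ℕ) ≤ kk e ∨ ((j : ℕ) = kk e + 1 ∧ (i : ℕ) ≤ tt e))))

/-- A graph on `Fin n` whose adjacency matrix is stepwise (i.e. a threshold graph whose
vertices are already arranged in the canonical order). -/
def IsStepwise {n : ℕ} (G : SimpleGraph (Fin n)) : Prop :=
  ∀ i j k l : Fin n, G.Adj i j → i < j → k < l → k ≤ i → l ≤ j → G.Adj k l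

/-- The (0-based) index of the last vertex of degree at least 2, i.e. the paper's `s - 1`. -/
noncomputable def sIdx {n : ℕ} (G : SimpleGraph (Fin n)) : ℕ :=
  Nat.findGreatest (fun i => ∃ h : i < n, 2 ≤ (G.neighborSet ⟨i, h⟩).ncard) (n - 1)

/-- The T-subgraph `T(G)`: the subgraph of `G` induced on vertices `1, …, sIdx G`
(paper vertices `2, …, s`). -/
noncomputable def Tgraph {n : ℕ} (G : SimpleGraph (Fin n)) : SimpleGraph (Fin (sIdx G)) :=
  SimpleGraph.comap (fun i => (⟨(i : ℕ) + 1, by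
    have h1 : (i : ℕ) < sIdx G := i.isLt
    have h2 : sIdx G ≤ n - 1 := by unfold sIdx; exact Nat.findGreatest_le _
    omega⟩ : Fin n)) G

/-- The graph `T1(G) = T(G) ∨ K_1`: the subgraph of `G` induced on vertices
`0, 1, …, sIdx G` (paper vertices `1, …, s`). -/
noncomputable def T1graph {n : ℕ} (G : SimpleGraph (Fin n)) : SimpleGraph (Fin (sIdx G + 1)) :=
  if h : 0 < n then
    SimpleGraph.comap (fun i => (⟨(i : ℕ) % n, Nat.mod_lt _ h⟩ : Fin n)) G
  else ⊥

/-- The rational function `R_G(λ) = λ · P_{T1(G)}(λ) / P_{T(G)}(λ)`. -/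
noncomputable def Rfun {n : ℕ} (G : SimpleGraph (Fin n)) : ℝ → ℝ :=
  fun x => x * (gCharPoly (T1graph G)).eval x / (gCharPoly (Tgraph G)).eval x

/-- The polynomial `Q_{G1,G2}`. -/
noncomputable def Qpoly {n : ℕ} (G1 G2 : SimpleGraph (Fin n)) : Polynomial ℝ :=
  X * (gCharPoly (T1graph G1) * gCharPoly (Tgraph G2)
       - gCharPoly (T1graph G2) * gCharPoly (Tgraph G1))
  + C ((sIdx G1 : ℝ) - (sIdx G2 : ℝ)) * (gCharPoly (Tgraph G1) * gCharPoly (Tgraph G2))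

/-- `r` is the largest real root of the polynomial `P`. -/
def IsGreatestRoot (P : Polynomial ℝ) (r : ℝ) : Prop :=
  P.eval r = 0 ∧ ∀ x : ℝ, P.eval x = 0 → x ≤ r

/-- `r` is the largest real zero of the function `f`. -/
def IsGreatestZero (f : ℝ → ℝ) (r : ℝ) : Prop :=
  f r = 0 ∧ ∀ x : ℝ, f x = 0 → x ≤ r

/-- Disjoint union of two simple graphs. -/
def gSum {α β : Type} (G : SimpleGraph α) (H : SimpleGraph β) : SimpleGraph (α ⊕ β) where
  Adj x y := (∃ a b, x = Sum.inl a ∧ y = Sum.inl b ∧ G.Adj a b) ∨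
             (∃ a b, x = Sum.inr a ∧ y = Sum.inr b ∧ H.Adj a b)
  symm := by
    constructor
    rintro x y (⟨a, b, rfl, rfl, hab⟩ | ⟨a, b, rfl, rfl, hab⟩)
    · exact Or.inl ⟨b, a, rfl, rfl, hab.symm⟩
    · exact Or.inr ⟨b, a, rfl, rfl, hab.symm⟩
  loopless := by
    constructor
    rintro x (⟨a, b, rfl, hx, hab⟩ | ⟨a, b, rfl, hx, hab⟩)
    · obtain rfl := Sum.inl.inj hx; exact G.loopless.irrefl a hab
    · obtain rfl := Sum.inr.inj hx; exact H.loopless.irrefl a hab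

/-- Join of two simple graphs: all cross edges are present. -/
def gJoin {α β : Type} (G : SimpleGraph α) (H : SimpleGraph β) : SimpleGraph (α ⊕ β) :=
  (gSum Gᶜ Hᶜ)ᶜ

/-- The polynomial `Ψ_e`. -/
noncomputable def PsiPoly (e : ℕ) : Polynomial ℝ :=
  let k : ℝ := kk e
  let t : ℝ := tt e
  C ((k - 1) * (k - 2) * (k ^ 2 - 3 * k + 4 * t)) * X ^ 3
  - C (k ^ 5 - 6 * k ^ 4 + k ^ 3 * (4 * t + 15) - k ^ 2 * (20 * t + 18)
        + k * (8 * t ^ 2 + 24 * t + 8) - (4 * t ^ 2 + 12 * t)) * X ^ 2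
  - C ((k ^ 2 - k + 2 * t) * (k ^ 3 + k ^ 2 * (t - 4) - k * (3 * t - 5)
        + (4 * t ^ 2 - 2 * t - 2))) * X
  + C (t * (k - t - 1) * (k ^ 2 - 3 * k + 2 * t) * (k ^ 2 - k + 2 * t))

/-!
Distinct vertices of `D_{n,e}` are adjacent according to a fixed `5 × 5` pattern on the classes
`{1}`, `{2, …, t+1}`, `{t+2, …, k+1}`, `{k+2}`, `{k+3, …, n}`. Two vertices of one class are
therefore twins, so a `γ`-eigenvector with `γ ∉ {0, -1}` is constant on classes, and `γ` is then an
eigenvalue of the quotient matrix, whose characteristic polynomial is the quintic of the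
statement. Conversely, an eigenvector of the quotient matrix for a root `x > 0` lifts to a
nonzero class-constant eigenvector of `D_{n,e}`, so `x ≤ ρ(D_{n,e}) = γ`.
-/

namespace SimpleGraph

open Finset

variable {V ι R : Type*} [Fintype V] {G : SimpleGraph V} [DecidableRel G.Adj]

section Pullback

variable [DecidableEq V] [CommRing R] {f : V → ι} {B : Matrix ι ι R}

/-- When the off-diagonal adjacency is pulled back from `B` along `f`, the entry `(a, b)` counts
the neighbours in `f ⁻¹' {b}` of a vertex in `f ⁻¹' {a}`: the vertex itself is excluded. -/
def quotientMatrix [Fintype ι] [DecidableEq ι] (f : V → ι) (B : Matrix ι ι R) : Matrix ι ι R :=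
  B * Matrix.diagonal (fun b => (#{j | f j = b} : R)) - Matrix.diagonal B.diag

theorem adjMatrix_mulVec_apply_of_pullback
    (hB : ∀ i j, i ≠ j → G.adjMatrix R i j = B (f i) (f j)) (z : V → R) (i : V) :
    (G.adjMatrix R *ᵥ z) i = ∑ j, B (f i) (f j) * z j - B (f i) (f i) * z i := by
  rw [Matrix.mulVec, dotProduct, ← add_sum_erase _ _ (mem_univ i),
    ← add_sum_erase _ _ (mem_univ i), adjMatrix_apply, if_neg (G.loopless.irrefl i)]
  have hoff : ∑ j ∈ univ.erase i, G.adjMatrix R i j * z j =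
      ∑ j ∈ univ.erase i, B (f i) (f j) * z j :=
    sum_congr rfl fun j hj => by rw [hB i j (ne_of_mem_erase hj).symm]
  rw [hoff]
  ring

theorem adjMatrix_mulVec_sub_of_pullback
    (hB : ∀ i j, i ≠ j → G.adjMatrix R i j = B (f i) (f j)) (z : V → R) {p q : V}
    (hpq : f p = f q) :
    (G.adjMatrix R *ᵥ z) p - (G.adjMatrix R *ᵥ z) q = B (f p) (f p) * (z q - z p) := by
  rw [adjMatrix_mulVec_apply_of_pullback hB, adjMatrix_mulVec_apply_of_pullback hB, hpq]
  ring

theorem eq_of_mulVec_eq_smul_of_pullback {R : Type*} [Field R] {B : Matrix ι ι R}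
    (hB : ∀ i j, i ≠ j → G.adjMatrix R i j = B (f i) (f j)) {y : V → R} {γ : R}
    (hy : G.adjMatrix R *ᵥ y = γ • y) {p q : V} (hpq : f p = f q)
    (hγ : γ + B (f p) (f p) ≠ 0) : y p = y q := by
  have h := adjMatrix_mulVec_sub_of_pullback hB y hpq
  simp only [hy, Pi.smul_apply, smul_eq_mul] at h
  have : (γ + B (f p) (f p)) * (y p - y q) = 0 := by linear_combination h
  exact sub_eq_zero.mp ((mul_eq_zero.mp this).resolve_left hγ)

theorem adjMatrix_mulVec_comp_of_pullback [Fintype ι] [DecidableEq ι]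
    (hB : ∀ i j, i ≠ j → G.adjMatrix R i j = B (f i) (f j)) (w : ι → R) :
    G.adjMatrix R *ᵥ (w ∘ f) = (quotientMatrix f B *ᵥ w) ∘ f := by
  ext i
  rw [adjMatrix_mulVec_apply_of_pullback hB]
  simp only [Function.comp_apply]
  rw [← sum_fiberwise' univ f fun b => B (f i) b * w b]
  simp only [quotientMatrix, Matrix.sub_mulVec, ← Matrix.mulVec_mulVec, Pi.sub_apply,
    Matrix.mulVec_diagonal, Matrix.diag_apply, sum_const, nsmul_eq_mul]
  simp only [Matrix.mulVec, dotProduct, Matrix.diagonal_apply, ite_mul, zero_mul, sum_ite_eq,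
    mem_univ, if_true, mul_left_comm]

end Pullback

theorem pos_of_adjMatrix_mulVec_eq_smul {y : V → ℝ} {γ : ℝ} (hy : G.adjMatrix ℝ *ᵥ y = γ • y)
    (hpos : ∀ i, 0 < y i) {i j : V} (hij : G.Adj i j) : 0 < γ := by
  have h := congrFun hy i
  rw [adjMatrix_mulVec_apply, Pi.smul_apply, smul_eq_mul] at h
  have : y j ≤ γ * y i := h ▸ single_le_sum (fun u _ => (hpos u).le)
    ((mem_neighborFinset G i j).mpr hij)
  exact pos_of_mul_pos_left (by linarith [hpos j]) (hpos i).le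

theorem abs_le_card_of_adjMatrix_mulVec_eq_smul {v : V → ℝ} {μ : ℝ} (hv : v ≠ 0)
    (h : G.adjMatrix ℝ *ᵥ v = μ • v) : |μ| ≤ Fintype.card V := by
  classical
  have hμ : Module.End.HasEigenvalue (Matrix.toLin' (G.adjMatrix ℝ)) μ :=
    Module.End.hasEigenvalue_of_hasEigenvector
      ⟨by simpa [Module.End.mem_eigenspace_iff] using h, hv⟩
  obtain ⟨i, hi⟩ := eigenvalue_mem_ball hμ
  rw [Metric.mem_closedBall, adjMatrix_apply, if_neg (G.loopless.irrefl i), Real.dist_eq,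
    sub_zero] at hi
  calc |μ| ≤ ∑ j ∈ univ.erase i, ‖G.adjMatrix ℝ i j‖ := hi
    _ ≤ ∑ _j ∈ univ.erase i, (1 : ℝ) :=
      sum_le_sum fun j _ => by rw [adjMatrix_apply]; split_ifs <;> simp
    _ ≤ Fintype.card V := by simp

end SimpleGraph

theorem abs_le_specRad {V : Type} [Fintype V] {G : SimpleGraph V} {v : V → ℝ} {μ : ℝ}
    (hv : v ≠ 0) (h : G.adjMatrix ℝ *ᵥ v = μ • v) : |μ| ≤ specRad G :=
  le_csSup ⟨Fintype.card V, by
    rintro _ ⟨ν, ⟨u, hu, hu'⟩, rfl⟩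
    exact SimpleGraph.abs_le_card_of_adjMatrix_mulVec_eq_smul hu hu'⟩ ⟨μ, ⟨v, hv, h⟩, rfl⟩

theorem Matrix.det_smul_one_sub_eq_zero_iff {ι K : Type*} [Fintype ι] [DecidableEq ι] [Field K]
    (M : Matrix ι ι K) (x : K) : (x • 1 - M).det = 0 ↔ ∃ w ≠ 0, M *ᵥ w = x • w := by
  rw [← Matrix.exists_mulVec_eq_zero_iff]
  simp only [Matrix.sub_mulVec, Matrix.smul_mulVec, Matrix.one_mulVec, sub_eq_zero, eq_comm]

open Finset in
theorem card_filter_fin_Ico {n : ℕ} (a b : ℕ) (hb : b ≤ n) :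
    #{i : Fin n | a ≤ (i : ℕ) ∧ (i : ℕ) < b} = b - a := by
  rw [← card_map Fin.valEmbedding]
  convert Nat.card_Ico a b
  ext i
  simp only [mem_map, mem_filter, mem_univ, true_and, Fin.valEmbedding_apply, mem_Ico]
  exact ⟨fun ⟨j, hj, hji⟩ => hji ▸ hj, fun hi => ⟨⟨i, by omega⟩, hi, rfl⟩⟩

theorem tt_lt_kk (e : ℕ) : tt e < kk e := by
  have hspec : kk e * (kk e - 1) ≤ 2 * e :=
    Nat.findGreatest_spec (P := fun k => k * (k - 1) ≤ 2 * e) (m := 1) (by omega) (by simp)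
  have hne : kk e ≠ e + 2 := fun h => by
    rw [h, show e + 2 - 1 = e + 1 by omega] at hspec
    nlinarith
  have hmax : ¬(kk e + 1) * kk e ≤ 2 * e :=
    Nat.findGreatest_is_greatest (P := fun k => k * (k - 1) ≤ 2 * e) (Nat.lt_succ_self _)
      (by have : kk e ≤ e + 2 := Nat.findGreatest_le _; omega)
  have heven : 2 * (kk e * (kk e - 1) / 2) = kk e * (kk e - 1) :=
    Nat.two_mul_div_two_of_even (Nat.even_mul_pred_self _)
  have hpred : kk e * (kk e - 1) = kk e * kk e - kk e := Nat.mul_sub_one _ _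
  have hsucc : (kk e + 1) * kk e = kk e * kk e + kk e := Nat.succ_mul _ _
  have := Nat.le_mul_self (kk e)
  unfold tt
  omega

def graphDClass (e n : ℕ) (i : Fin n) : Fin 5 :=
  if (i : ℕ) = 0 then 0 else if (i : ℕ) ≤ tt e then 1 else if (i : ℕ) ≤ kk e then 2
  else if (i : ℕ) = kk e + 1 then 3 else 4

def graphDPattern : Matrix (Fin 5) (Fin 5) ℝ :=
  !![0, 1, 1, 1, 1;
     1, 1, 1, 1, 0;
     1, 1, 1, 0, 0;
     1, 1, 0, 0, 0;
     1, 0, 0, 0, 0]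

def graphDQuotient (e n : ℕ) : Matrix (Fin 5) (Fin 5) ℝ :=
  !![0, (tt e : ℝ), (kk e : ℝ) - tt e, 1, (n : ℝ) - kk e - 2;
     1, (tt e : ℝ) - 1, (kk e : ℝ) - tt e, 1, 0;
     1, (tt e : ℝ), (kk e : ℝ) - tt e - 1, 0, 0;
     1, (tt e : ℝ), 0, 0, 0;
     1, 0, 0, 0, 0]

theorem graphDClass_eq_iff (e n : ℕ) (i : Fin n) (b : Fin 5) :
    graphDClass e n i = b ↔
      ![0, 1, tt e + 1, kk e + 1, kk e + 2] b ≤ (i : ℕ) ∧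
        (i : ℕ) < ![1, tt e + 1, kk e + 1, kk e + 2, n] b := by
  have htk := tt_lt_kk e
  have hi := i.isLt
  unfold graphDClass
  fin_cases b <;> split_ifs <;> simp <;> omega

section graphDClass

variable {e n : ℕ} {i : Fin n}

theorem graphDClass_eq_zero_iff : graphDClass e n i = 0 ↔ (i : ℕ) = 0 := by
  rw [graphDClass_eq_iff]; simp only [Matrix.cons_val]; omega

theorem graphDClass_eq_one_iff : graphDClass e n i = 1 ↔ 1 ≤ (i : ℕ) ∧ (i : ℕ) ≤ tt e := by
  rw [graphDClass_eq_iff]; simp only [Matrix.cons_val]; omega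

theorem graphDClass_eq_two_iff :
    graphDClass e n i = 2 ↔ tt e + 1 ≤ (i : ℕ) ∧ (i : ℕ) ≤ kk e := by
  rw [graphDClass_eq_iff]; simp only [Matrix.cons_val]; omega

theorem graphDClass_eq_three_iff : graphDClass e n i = 3 ↔ (i : ℕ) = kk e + 1 := by
  rw [graphDClass_eq_iff]; simp only [Matrix.cons_val]; omega

theorem graphDClass_eq_four_iff : graphDClass e n i = 4 ↔ kk e + 2 ≤ (i : ℕ) := by
  have := i.isLt
  rw [graphDClass_eq_iff]; simp only [Matrix.cons_val]; omega

end graphDClass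

theorem graphD_adjMatrix_of_ne {n e : ℕ} {i j : Fin n} (hij : i ≠ j) :
    (graphD n e).adjMatrix ℝ i j = graphDPattern (graphDClass e n i) (graphDClass e n j) := by
  have htk := tt_lt_kk e
  have hij' : (i : ℕ) ≠ j := Fin.val_ne_of_ne hij
  rw [SimpleGraph.adjMatrix_apply, graphD, SimpleGraph.fromRel_adj]
  unfold graphDClass
  split_ifs <;> simp [graphDPattern] <;> omega

open Finset in
theorem card_graphDClass {e n : ℕ} (hn : kk e + 2 ≤ n) (b : Fin 5) :
    (#{i | graphDClass e n i = b} : ℝ) = ![1, (tt e : ℝ), kk e - tt e, 1, n - kk e - 2] b := by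
  have htk := tt_lt_kk e
  simp_rw [graphDClass_eq_iff]
  rw [card_filter_fin_Ico _ _
    (by fin_cases b <;> simp only [Fin.reduceFinMk, Matrix.cons_val] <;> omega)]
  fin_cases b <;> simp [Nat.cast_sub, htk.le, hn]
  ring

theorem quotientMatrix_graphDClass {e n : ℕ} (hn : kk e + 2 ≤ n) :
    SimpleGraph.quotientMatrix (graphDClass e n) graphDPattern = graphDQuotient e n := by
  ext a b
  simp only [SimpleGraph.quotientMatrix, Matrix.sub_apply, Matrix.mul_diagonal,
    card_graphDClass hn, Matrix.diagonal_apply, Matrix.diag_apply]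
  fin_cases a <;> fin_cases b <;> simp [graphDPattern, graphDQuotient]

theorem det_graphDQuotient (e n : ℕ) (x : ℝ) :
    (x • 1 - graphDQuotient e n).det =
      x * (x + 1) * (x ^ 3 - x ^ 2 * ((kk e : ℝ) - 1) - x * ((kk e : ℝ) + (tt e : ℝ) + 1)
          + ((tt e : ℝ) + 1) * ((kk e : ℝ) - (tt e : ℝ) - 1))
        - ((n : ℝ) - (kk e : ℝ) - 2) * (x ^ 3 - x ^ 2 * ((kk e : ℝ) - 2)
          - x * ((kk e : ℝ) + (tt e : ℝ) - 1) + (tt e : ℝ) * ((kk e : ℝ) - (tt e : ℝ) - 1)) := by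
  have hmat : x • 1 - graphDQuotient e n =
      !![x, -(tt e : ℝ), (tt e : ℝ) - kk e, -1, (kk e : ℝ) + 2 - n;
         -1, x - tt e + 1, (tt e : ℝ) - kk e, -1, 0;
         -1, -(tt e : ℝ), x - kk e + tt e + 1, 0, 0;
         -1, -(tt e : ℝ), 0, x, 0;
         -1, 0, 0, 0, x] := by
    ext i j
    fin_cases i <;> fin_cases j <;> simp [graphDQuotient] <;> ring
  rw [hmat]
  generalize (tt e : ℝ) = t, (kk e : ℝ) = k, (n : ℝ) = m
  simp [Matrix.det_succ_row_zero, Fin.sum_univ_succ, Fin.succAbove]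
  ring

theorem graphD_mulVec_comp {e n : ℕ} (hn : kk e + 2 ≤ n) (w : Fin 5 → ℝ) :
    (graphD n e).adjMatrix ℝ *ᵥ (w ∘ graphDClass e n) =
      (graphDQuotient e n *ᵥ w) ∘ graphDClass e n := by
  rw [SimpleGraph.adjMatrix_mulVec_comp_of_pullback (fun _ _ => graphD_adjMatrix_of_ne),
    quotientMatrix_graphDClass hn]

theorem graphD_eq_of_graphDClass_eq {e n : ℕ} {y : Fin n → ℝ} {γ : ℝ}
    (hy : (graphD n e).adjMatrix ℝ *ᵥ y = γ • y) (hγ : 0 < γ) {p q : Fin n}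
    (hpq : graphDClass e n p = graphDClass e n q) : y p = y q := by
  refine SimpleGraph.eq_of_mulVec_eq_smul_of_pullback (fun _ _ => graphD_adjMatrix_of_ne) hy
    hpq (ne_of_gt ?_)
  generalize graphDClass e n p = b
  fin_cases b <;> simp [graphDPattern] <;> linarith

theorem graphDQuotient_mulVec_eq_of_eigenvector {e n : ℕ} (hn : kk e + 2 ≤ n) {y : Fin n → ℝ}
    {γ : ℝ} (hy : (graphD n e).adjMatrix ℝ *ᵥ y = γ • y) (hγ : 0 < γ) {v1 v2 vk vk1 vn : Fin n}
    (h1 : (v1 : ℕ) = 0) (h2 : (v2 : ℕ) = 1) (hk : (vk : ℕ) = kk e) (hk1 : (vk1 : ℕ) = kk e + 1)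
    (hvn : (vn : ℕ) = n - 1) (i : Fin n) :
    (graphDQuotient e n *ᵥ (y ∘ ![v1, v2, vk, vk1, vn])) (graphDClass e n i) = γ * y i := by
  have hcomp : y = (y ∘ ![v1, v2, vk, vk1, vn]) ∘ graphDClass e n := by
    funext j
    have hrep : graphDClass e n (![v1, v2, vk, vk1, vn] (graphDClass e n j)) =
        graphDClass e n j := by
      have htk := tt_lt_kk e
      have hj := j.isLt
      generalize hb : graphDClass e n j = b
      rw [graphDClass_eq_iff] at hb ⊢
      fin_cases b <;> simp only [Fin.reduceFinMk, Matrix.cons_val] at hb ⊢ <;> omega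
    exact (graphD_eq_of_graphDClass_eq hy hγ hrep).symm
  have := congrFun (graphD_mulVec_comp hn (y ∘ ![v1, v2, vk, vk1, vn])) i
  rwa [← hcomp, hy, eq_comm] at this

theorem graphD_eigenvector_equations {e n : ℕ} (hn : kk e + 2 ≤ n) (ht : 1 ≤ tt e)
    {y : Fin n → ℝ} {γ : ℝ} (hy : (graphD n e).adjMatrix ℝ *ᵥ y = γ • y) (hγ : 0 < γ)
    {v1 v2 vk vk1 vn : Fin n} (h1 : (v1 : ℕ) = 0) (h2 : (v2 : ℕ) = 1) (hk : (vk : ℕ) = kk e)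
    (hk1 : (vk1 : ℕ) = kk e + 1) (hvn : (vn : ℕ) = n - 1) :
    ((γ + 1) * y v1 = y v1 + (tt e : ℝ) * y v2 + ((kk e : ℝ) - (tt e : ℝ)) * y vk
        + y vk1 + ((n : ℝ) - (kk e : ℝ) - 2) * y vn) ∧
    ((γ + 1) * y v2 = y v1 + (tt e : ℝ) * y v2 + ((kk e : ℝ) - (tt e : ℝ)) * y vk + y vk1) ∧
    ((γ + 1) * y vk = y v1 + (tt e : ℝ) * y v2 + ((kk e : ℝ) - (tt e : ℝ)) * y vk) ∧
    (γ * y vk1 = y v1 + (tt e : ℝ) * y v2) ∧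
    (kk e + 2 < n → γ * y vn = y v1) := by
  have htk := tt_lt_kk e
  have row (v : Fin n) (b : Fin 5) (hb : graphDClass e n v = b) :=
    hb ▸ graphDQuotient_mulVec_eq_of_eigenvector hn hy hγ h1 h2 hk hk1 hvn v
  have r0 := row v1 0 (graphDClass_eq_zero_iff.2 h1)
  have r1 := row v2 1 (graphDClass_eq_one_iff.2 (by omega))
  have r2 := row vk 2 (graphDClass_eq_two_iff.2 (by omega))
  have r3 := row vk1 3 (graphDClass_eq_three_iff.2 hk1)
  simp only [graphDQuotient, Matrix.mulVec, dotProduct, Fin.sum_univ_five, Matrix.of_apply,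
    Matrix.cons_val, Function.comp_apply] at r0 r1 r2 r3
  refine ⟨by linear_combination -r0, by linear_combination -r1, by linear_combination -r2,
    by linear_combination -r3, fun hlt => ?_⟩
  have r4 := row vn 4 (graphDClass_eq_four_iff.2 (by omega))
  simp only [graphDQuotient, Matrix.mulVec, dotProduct, Fin.sum_univ_five, Matrix.of_apply,
    Matrix.cons_val, Function.comp_apply] at r4
  linear_combination -r4

theorem exists_graphDQuotient_mulVec_eq_smul {e n : ℕ} (hn : kk e + 2 ≤ n) (ht : 1 ≤ tt e)
    {y : Fin n → ℝ} {γ : ℝ} (hy : (graphD n e).adjMatrix ℝ *ᵥ y = γ • y) (hγ : 0 < γ)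
    (hpos : ∀ i, 0 < y i) : ∃ w ≠ 0, graphDQuotient e n *ᵥ w = γ • w := by
  have htk := tt_lt_kk e
  set v1 : Fin n := ⟨0, by omega⟩
  obtain ⟨E0, E1, E2, E3, E4⟩ := graphD_eigenvector_equations hn ht hy hγ (v1 := v1)
    (v2 := ⟨1, by omega⟩) (vk := ⟨kk e, by omega⟩) (vk1 := ⟨kk e + 1, by omega⟩)
    (vn := ⟨n - 1, by omega⟩) rfl rfl rfl rfl rfl
  -- `y v1 / γ` is the common value on the pendant vertices, if there are any.
  have hpend : ((n : ℝ) - kk e - 2) * y ⟨n - 1, by omega⟩ =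
      ((n : ℝ) - kk e - 2) * (y v1 / γ) := by
    rcases hn.lt_or_eq with hlt | heq
    · rw [← E4 hlt, mul_div_cancel_left₀ _ hγ.ne']
    · have : (n : ℝ) - kk e - 2 = 0 := by rw [← heq]; push_cast; ring
      simp [this]
  refine ⟨![y v1, y ⟨1, by omega⟩, y ⟨kk e, by omega⟩, y ⟨kk e + 1, by omega⟩, y v1 / γ],
    fun h => (hpos v1).ne' (congrFun h 0), ?_⟩
  ext b
  fin_cases b <;> simp only [Fin.reduceFinMk, graphDQuotient, Matrix.mulVec,
    dotProduct, Fin.sum_univ_five, Matrix.of_apply, Matrix.cons_val, Pi.smul_apply, smul_eq_mul]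
  · linear_combination -E0 - hpend
  · linear_combination -E1
  · linear_combination -E2
  · linear_combination -E3
  · field_simp
    ring

theorem comp_graphDClass_ne_zero {e n : ℕ} (hn : kk e + 2 ≤ n) (ht : 1 ≤ tt e) {w : Fin 5 → ℝ}
    {x : ℝ} (hw : w ≠ 0) (hx : x ≠ 0) (hQ : graphDQuotient e n *ᵥ w = x • w) :
    w ∘ graphDClass e n ≠ 0 := by
  intro h0
  have htk := tt_lt_kk e
  have hval (j : ℕ) (hj : j < n) (b : Fin 5) (hb : graphDClass e n ⟨j, hj⟩ = b) : w b = 0 := by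
    rw [← hb]; exact congrFun h0 ⟨j, hj⟩
  have w0 := hval 0 (by omega) 0 (graphDClass_eq_zero_iff.2 rfl)
  have w1 := hval 1 (by omega) 1 (graphDClass_eq_one_iff.2 ⟨le_rfl, ht⟩)
  have w2 := hval (kk e) (by omega) 2 (graphDClass_eq_two_iff.2 ⟨htk, le_rfl⟩)
  have w3 := hval (kk e + 1) (by omega) 3 (graphDClass_eq_three_iff.2 rfl)
  have w4 : x * w 4 = w 0 := by
    simpa [graphDQuotient, Matrix.mulVec, dotProduct, Fin.sum_univ_five, eq_comm] using
      congrFun hQ 4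
  apply hw
  funext b
  fin_cases b <;> simp_all

theorem le_specRad_of_det_graphDQuotient {e n : ℕ} (hn : kk e + 2 ≤ n) (ht : 1 ≤ tt e) {x : ℝ}
    (hx : 0 < x) (hdet : (x • 1 - graphDQuotient e n).det = 0) :
    x ≤ specRad (graphD n e) := by
  obtain ⟨w, hw, hQ⟩ := (Matrix.det_smul_one_sub_eq_zero_iff _ _).mp hdet
  have hv : (graphD n e).adjMatrix ℝ *ᵥ (w ∘ graphDClass e n) = x • (w ∘ graphDClass e n) := by
    rw [graphD_mulVec_comp hn, hQ]
    rfl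
  exact (le_abs_self x).trans (abs_le_specRad (comp_graphDClass_ne_zero hn ht hw hx.ne' hQ) hv)

theorem stmt_1_general (e n : ℕ) (ht : 1 ≤ tt e) (hn : bb e ≤ n)
    (γ : ℝ) (hγ : γ = specRad (graphD n e))
    (y : Fin n → ℝ) (hy : ((graphD n e).adjMatrix ℝ).mulVec y = γ • y)
    (hpos : ∀ i, 0 < y i) :
    (∀ p q : Fin n, 1 ≤ (p : ℕ) → (p : ℕ) ≤ tt e → 1 ≤ (q : ℕ) → (q : ℕ) ≤ tt e →
      y p = y q) ∧
    (∀ p q : Fin n, tt e + 1 ≤ (p : ℕ) → (p : ℕ) ≤ kk e →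
      tt e + 1 ≤ (q : ℕ) → (q : ℕ) ≤ kk e → y p = y q) ∧
    (∀ p q : Fin n, kk e + 2 ≤ (p : ℕ) → kk e + 2 ≤ (q : ℕ) → y p = y q) ∧
    (∀ v1 v2 vk vk1 vn : Fin n, (v1 : ℕ) = 0 → (v2 : ℕ) = 1 → (vk : ℕ) = kk e →
      (vk1 : ℕ) = kk e + 1 → (vn : ℕ) = n - 1 →
      ((γ + 1) * y v1 = y v1 + (tt e : ℝ) * y v2 + ((kk e : ℝ) - (tt e : ℝ)) * y vk
          + y vk1 + ((n : ℝ) - (kk e : ℝ) - 2) * y vn) ∧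
      ((γ + 1) * y v2 = y v1 + (tt e : ℝ) * y v2 + ((kk e : ℝ) - (tt e : ℝ)) * y vk + y vk1) ∧
      ((γ + 1) * y vk = y v1 + (tt e : ℝ) * y v2 + ((kk e : ℝ) - (tt e : ℝ)) * y vk) ∧
      (γ * y vk1 = y v1 + (tt e : ℝ) * y v2) ∧
      (kk e + 2 < n → γ * y vn = y v1)) ∧
    IsGreatestZero (fun x : ℝ =>
      x * (x + 1) * (x ^ 3 - x ^ 2 * ((kk e : ℝ) - 1) - x * ((kk e : ℝ) + (tt e : ℝ) + 1)
          + ((tt e : ℝ) + 1) * ((kk e : ℝ) - (tt e : ℝ) - 1))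
        - ((n : ℝ) - (kk e : ℝ) - 2) * (x ^ 3 - x ^ 2 * ((kk e : ℝ) - 2)
          - x * ((kk e : ℝ) + (tt e : ℝ) - 1) + (tt e : ℝ) * ((kk e : ℝ) - (tt e : ℝ) - 1))) γ := by
  have htk := tt_lt_kk e
  have hn' : kk e + 2 ≤ n := by
    have : tt e ≤ e := Nat.sub_le _ _
    unfold bb at hn
    split_ifs at hn <;> omega
  have hγpos : 0 < γ := SimpleGraph.pos_of_adjMatrix_mulVec_eq_smul hy hpos
    (i := ⟨0, by omega⟩) (j := ⟨1, by omega⟩) (by simp [graphD, Fin.ext_iff])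
  have hblock (b : Fin 5) (p q : Fin n) (hp : graphDClass e n p = b)
      (hq : graphDClass e n q = b) : y p = y q :=
    graphD_eq_of_graphDClass_eq hy hγpos (hp.trans hq.symm)
  refine ⟨fun p q hp hp' hq hq' => hblock 1 p q (graphDClass_eq_one_iff.2 ⟨hp, hp'⟩)
      (graphDClass_eq_one_iff.2 ⟨hq, hq'⟩),
    fun p q hp hp' hq hq' => hblock 2 p q (graphDClass_eq_two_iff.2 ⟨hp, hp'⟩)
      (graphDClass_eq_two_iff.2 ⟨hq, hq'⟩),
    fun p q hp hq => hblock 4 p q (graphDClass_eq_four_iff.2 hp) (graphDClass_eq_four_iff.2 hq),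
    fun _ _ _ _ _ => graphD_eigenvector_equations hn' ht hy hγpos, ?_, fun x hx => ?_⟩
  · exact (det_graphDQuotient e n γ).symm.trans ((Matrix.det_smul_one_sub_eq_zero_iff _ _).mpr
      (exists_graphDQuotient_mulVec_eq_smul hn' ht hy hγpos hpos))
  · rcases le_or_gt x 0 with hx0 | hx0
    · linarith
    · exact hγ ▸ le_specRad_of_det_graphDQuotient hn' ht hx0 ((det_graphDQuotient e n x).trans hx)

theorem stmt_1 (e n : ℕ) (he : 4 ≤ e) (ht : 1 ≤ tt e) (hn : bb e ≤ n)
    (γ : ℝ) (hγ : γ = specRad (graphD n e))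
    (y : Fin n → ℝ) (hy : ((graphD n e).adjMatrix ℝ).mulVec y = γ • y)
    (hpos : ∀ i, 0 < y i) :
    (∀ p q : Fin n, 1 ≤ (p : ℕ) → (p : ℕ) ≤ tt e → 1 ≤ (q : ℕ) → (q : ℕ) ≤ tt e →
      y p = y q) ∧
    (∀ p q : Fin n, tt e + 1 ≤ (p : ℕ) → (p : ℕ) ≤ kk e →
      tt e + 1 ≤ (q : ℕ) → (q : ℕ) ≤ kk e → y p = y q) ∧
    (∀ p q : Fin n, kk e + 2 ≤ (p : ℕ) → kk e + 2 ≤ (q : ℕ) → y p = y q) ∧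
    (∀ v1 v2 vk vk1 vn : Fin n, (v1 : ℕ) = 0 → (v2 : ℕ) = 1 → (vk : ℕ) = kk e →
      (vk1 : ℕ) = kk e + 1 → (vn : ℕ) = n - 1 →
      ((γ + 1) * y v1 = y v1 + (tt e : ℝ) * y v2 + ((kk e : ℝ) - (tt e : ℝ)) * y vk
          + y vk1 + ((n : ℝ) - (kk e : ℝ) - 2) * y vn) ∧
      ((γ + 1) * y v2 = y v1 + (tt e : ℝ) * y v2 + ((kk e : ℝ) - (tt e : ℝ)) * y vk + y vk1) ∧
      ((γ + 1) * y vk = y v1 + (tt e : ℝ) * y v2 + ((kk e : ℝ) - (tt e : ℝ)) * y vk) ∧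
      (γ * y vk1 = y v1 + (tt e : ℝ) * y v2) ∧
      (kk e + 2 < n → γ * y vn = y v1)) ∧
    IsGreatestZero (fun x : ℝ =>
      x * (x + 1) * (x ^ 3 - x ^ 2 * ((kk e : ℝ) - 1) - x * ((kk e : ℝ) + (tt e : ℝ) + 1)
          + ((tt e : ℝ) + 1) * ((kk e : ℝ) - (tt e : ℝ) - 1))
        - ((n : ℝ) - (kk e : ℝ) - 2) * (x ^ 3 - x ^ 2 * ((kk e : ℝ) - 2)
          - x * ((kk e : ℝ) + (tt e : ℝ) - 1) + (tt e : ℝ) * ((kk e : ℝ) - (tt e : ℝ) - 1))) γ :=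
  stmt_1_general e n ht hn γ hγ y hy hpos
end

section
/- Let e ≥ 4 and n ≥ e+2 be integers, and let χ = ρ(V_{n,e}). Suppose z is an eigenvector of the adjacency matrix of V_{n,e} with eigenvalue χ all of whose entries are positive. Then z_3 = z_4 = ... = z_{e+2} and z_{e+3} = z_{e+4} = ... = z_n, and: (χ+1)z_1 = z_1 + z_2 + e·z_3 + (n-e-2)·z_n; (χ+1)z_2 = z_1 + z_2 + e·z_3; χ·z_3 = z_1 + z_2; and, provided n > e+2, χ·z_n = z_1. Moreover, χ is the largest real root of the polynomial λ(λ+1)(λ² - λ - 2e) - (n-e-2)(λ² - e). -/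
open Polynomial Matrix

attribute [local instance] Classical.propDecidable

/-!
At a leaf of the star `K_{1,e}` and at a pendant vertex the eigen-equations read
`χ z_p = z_1 + z_2` and `χ z_p = z_1`, so `z` is constant on these two classes and reduces to
four unknowns `z_1, z_2, z_3, z_n` satisfying a 4 × 4 quotient system. Eliminating them gives
`z_3 · f(χ) = 0` for the quartic `f`, and the same equations, together with positivity, give
`χ² ≥ χ + 2e` and `χ² > e + m` with `m = n - e - 2`. With these bounds the factorisation
`f(x) - f(χ) = (x - χ) ((x + χ) (x² + χ² - 2e - 1 - m) - 2e)` shows that `f > 0` beyond `χ`.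
-/

-- `m` stands for the number `n - e - 2` of pendant vertices of `V_{n,e}`.
def quarticV (e m x : ℝ) : ℝ :=
  x * (x + 1) * (x ^ 2 - x - 2 * e) - m * (x ^ 2 - e)

section Quartic

variable {e m χ a b c d : ℝ}

lemma quarticV_sub_quarticV (e m x y : ℝ) :
    quarticV e m x - quarticV e m y
      = (x - y) * ((x + y) * (x ^ 2 + y ^ 2 - 2 * e - 1 - m) - 2 * e) := by
  unfold quarticV; ring

lemma quarticV_pos_of_lt {x : ℝ} (he : 0 ≤ e) (hχ : 0 < χ) (h₁ : χ + 2 * e ≤ χ ^ 2)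
    (h₂ : e + m < χ ^ 2) (hroot : quarticV e m χ = 0) (hx : χ < x) :
    0 < quarticV e m x := by
  have hsq : χ ^ 2 < x ^ 2 := by nlinarith
  have hfactor : 2 * e < (x + χ) * (x ^ 2 + χ ^ 2 - 2 * e - 1 - m) := by
    have hlow : 0 ≤ χ + e - 1 := by nlinarith
    calc 2 * e ≤ 2 * χ * (χ + e - 1) := by nlinarith
      _ ≤ (x + χ) * (χ + e - 1) := by nlinarith
      _ < (x + χ) * (x ^ 2 + χ ^ 2 - 2 * e - 1 - m) :=
        mul_lt_mul_of_pos_left (by linarith) (by linarith)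
  linarith [quarticV_sub_quarticV e m x χ, mul_pos (sub_pos.2 hx) (sub_pos.2 hfactor)]

lemma isGreatestZero_quarticV (he : 0 ≤ e) (hm : 0 ≤ m) (ha : 0 < a) (hb : 0 < b) (hc : 0 < c)
    (hd : 0 < d) (Ea : χ * a = b + e * c + m * d) (Eb : χ * b = a + e * c)
    (Ec : χ * c = a + b) (Ed : 0 < m → χ * d = a) :
    IsGreatestZero (quarticV e m) χ := by
  have hχ : 0 < χ := pos_of_mul_pos_left (by rw [Ec]; positivity) hc.le
  replace Ed : m * (χ * d) = m * a := by
    rcases hm.eq_or_lt with hm | hm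
    · simp [← hm]
    · rw [Ed hm]
  have hroot : quarticV e m χ = 0 := by
    have : c * quarticV e m χ = 0 := by
      unfold quarticV
      linear_combination (χ * (χ + 1) * (χ - 1) - m * χ) * Ec + (χ * (χ + 1) - m) * Eb
        + χ * (χ + 1) * Ea + (χ + 1) * Ed
    exact (mul_eq_zero.1 this).resolve_left hc.ne'
  have h₁ : χ + 2 * e ≤ χ ^ 2 := by
    have : c * (χ ^ 2 - χ - 2 * e) = m * d := by linear_combination χ * Ec + Eb + Ea - Ec
    nlinarith [mul_nonneg hm hd.le]
  have h₂ : e + m < χ ^ 2 := by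
    have : a * (χ ^ 2 - e - m) = b * (χ + e) := by linear_combination χ * Ea + e * Ec + Ed
    nlinarith [mul_pos hb (show 0 < χ + e by linarith)]
  exact ⟨hroot, fun x hx => not_lt.1 fun hlt =>
    (quarticV_pos_of_lt he hχ h₁ h₂ hroot hlt).ne' hx⟩

end Quartic

lemma SimpleGraph.mul_eq_sum_neighborFinset_of_mulVec_eq_smul {V : Type*} [Fintype V]
    {G : SimpleGraph V} [DecidableRel G.Adj] {χ : ℝ} {z : V → ℝ}
    (hz : G.adjMatrix ℝ *ᵥ z = χ • z) (i : V) :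
    χ * z i = ∑ j ∈ G.neighborFinset i, z j := by
  rw [← SimpleGraph.adjMatrix_mulVec_apply, hz, Pi.smul_apply, smul_eq_mul]

open Finset in
lemma Fin.card_filter_val {n : ℕ} (P : ℕ → Prop) [DecidablePred P] :
    #{j : Fin n | P j} = #{k ∈ range n | P k} := by
  rw [← card_map Fin.valEmbedding]
  congr 1
  ext k
  simp only [mem_map, mem_filter, mem_univ, true_and, Fin.valEmbedding_apply, mem_range]
  exact ⟨fun ⟨j, hj, hjk⟩ => hjk ▸ ⟨j.isLt, hj⟩, fun ⟨hk, hP⟩ => ⟨⟨k, hk⟩, hP, rfl⟩⟩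

namespace graphV

open Finset SimpleGraph

variable {n e : ℕ}

lemma adj_iff {i j : Fin n} :
    (graphV n e).Adj i j ↔ i ≠ j ∧ ((i : ℕ) = 0 ∨ (j : ℕ) = 0 ∨
      ((i : ℕ) = 1 ∧ 2 ≤ (j : ℕ) ∧ (j : ℕ) ≤ e + 1) ∨
      ((j : ℕ) = 1 ∧ 2 ≤ (i : ℕ) ∧ (i : ℕ) ≤ e + 1)) := by
  simp only [graphV, fromRel_adj]
  tauto

variable (n e) in
def starLeaves : Finset (Fin n) := {j | 2 ≤ (j : ℕ) ∧ (j : ℕ) ≤ e + 1}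

variable (n e) in
def pendants : Finset (Fin n) := {j | e + 2 ≤ (j : ℕ)}

@[simp]
lemma mem_starLeaves {p : Fin n} : p ∈ starLeaves n e ↔ 2 ≤ (p : ℕ) ∧ (p : ℕ) ≤ e + 1 := by
  simp [starLeaves]

@[simp]
lemma mem_pendants {p : Fin n} : p ∈ pendants n e ↔ e + 2 ≤ (p : ℕ) := by
  simp [pendants]

lemma card_starLeaves (hn : e + 2 ≤ n) : #(starLeaves n e) = e := by
  have h : {k ∈ range n | 2 ≤ k ∧ k ≤ e + 1} = Ico 2 (e + 2) := by
    ext k; simp only [mem_filter, mem_range, mem_Ico]; omega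
  have := Fin.card_filter_val (n := n) (fun k => 2 ≤ k ∧ k ≤ e + 1)
  rw [h, Nat.card_Ico, show e + 2 - 2 = e by omega] at this
  exact this

lemma card_pendants : #(pendants n e) = n - (e + 2) := by
  have h : {k ∈ range n | e + 2 ≤ k} = Ico (e + 2) n := by
    ext k; simp only [mem_filter, mem_range, mem_Ico]; omega
  have := Fin.card_filter_val (n := n) (e + 2 ≤ ·)
  rw [h, Nat.card_Ico] at this
  exact this

variable {u v : Fin n}

lemma neighborFinset_apex (hu : (u : ℕ) = 0) (hv : (v : ℕ) = 1) :
    (graphV n e).neighborFinset u = insert v (starLeaves n e ∪ pendants n e) := by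
  ext j
  simp only [mem_neighborFinset, adj_iff, mem_insert, mem_union, mem_starLeaves, mem_pendants,
    ne_eq, Fin.ext_iff]
  omega

lemma neighborFinset_starCenter (hu : (u : ℕ) = 0) (hv : (v : ℕ) = 1) :
    (graphV n e).neighborFinset v = insert u (starLeaves n e) := by
  ext j
  simp only [mem_neighborFinset, adj_iff, mem_insert, mem_starLeaves, ne_eq, Fin.ext_iff]
  omega

lemma neighborFinset_of_mem_starLeaves (hu : (u : ℕ) = 0) (hv : (v : ℕ) = 1) {p : Fin n}
    (hp : p ∈ starLeaves n e) : (graphV n e).neighborFinset p = {u, v} := by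
  rw [mem_starLeaves] at hp
  ext j
  simp only [mem_neighborFinset, adj_iff, mem_insert, mem_singleton, ne_eq, Fin.ext_iff]
  omega

lemma neighborFinset_of_mem_pendants (hu : (u : ℕ) = 0) {p : Fin n} (hp : p ∈ pendants n e) :
    (graphV n e).neighborFinset p = {u} := by
  rw [mem_pendants] at hp
  ext j
  simp only [mem_neighborFinset, adj_iff, mem_singleton, ne_eq, Fin.ext_iff]
  omega

variable {χ : ℝ} {z : Fin n → ℝ}

lemma eigen_of_mem_starLeaves (hz : (graphV n e).adjMatrix ℝ *ᵥ z = χ • z)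
    (hu : (u : ℕ) = 0) (hv : (v : ℕ) = 1) {p : Fin n} (hp : p ∈ starLeaves n e) :
    χ * z p = z u + z v := by
  rw [mul_eq_sum_neighborFinset_of_mulVec_eq_smul hz, neighborFinset_of_mem_starLeaves hu hv hp,
    sum_pair (by simp [Fin.ext_iff, hu, hv])]

lemma eigen_of_mem_pendants (hz : (graphV n e).adjMatrix ℝ *ᵥ z = χ • z)
    (hu : (u : ℕ) = 0) {p : Fin n} (hp : p ∈ pendants n e) : χ * z p = z u := by
  rw [mul_eq_sum_neighborFinset_of_mulVec_eq_smul hz, neighborFinset_of_mem_pendants hu hp,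
    sum_singleton]

lemma eigen_starCenter (hz : (graphV n e).adjMatrix ℝ *ᵥ z = χ • z)
    (hu : (u : ℕ) = 0) (hv : (v : ℕ) = 1) (hn : e + 2 ≤ n) {c : ℝ}
    (hc : ∀ p ∈ starLeaves n e, z p = c) : χ * z v = z u + e * c := by
  rw [mul_eq_sum_neighborFinset_of_mulVec_eq_smul hz, neighborFinset_starCenter hu hv,
    sum_insert (by simp [hu]), sum_eq_card_nsmul hc, card_starLeaves hn, nsmul_eq_mul]

lemma eigen_apex (hz : (graphV n e).adjMatrix ℝ *ᵥ z = χ • z)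
    (hu : (u : ℕ) = 0) (hv : (v : ℕ) = 1) (hn : e + 2 ≤ n) {c d : ℝ}
    (hc : ∀ p ∈ starLeaves n e, z p = c) (hd : ∀ p ∈ pendants n e, z p = d) :
    χ * z u = z v + e * c + (n - e - 2) * d := by
  have hdisj : Disjoint (starLeaves n e) (pendants n e) :=
    disjoint_filter.2 fun j _ hj hj' => by omega
  rw [mul_eq_sum_neighborFinset_of_mulVec_eq_smul hz, neighborFinset_apex hu hv,
    sum_insert (by simp [hv]), sum_union hdisj, sum_eq_card_nsmul hc,
    sum_eq_card_nsmul hd, card_starLeaves hn, card_pendants, nsmul_eq_mul, nsmul_eq_mul,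
    Nat.cast_sub hn]
  push_cast
  ring

lemma eigenvalue_pos (he : 1 ≤ e) (hn : e + 2 ≤ n)
    (hz : (graphV n e).adjMatrix ℝ *ᵥ z = χ • z) (hpos : ∀ i, 0 < z i) : 0 < χ := by
  let w : Fin n := ⟨2, by omega⟩
  have hw : w ∈ starLeaves n e := mem_starLeaves.2 ⟨le_rfl, by simp [w]; omega⟩
  refine pos_of_mul_pos_left ?_ (hpos w).le
  rw [eigen_of_mem_starLeaves hz (u := ⟨0, by omega⟩) (v := ⟨1, by omega⟩) rfl rfl hw]
  exact add_pos (hpos _) (hpos _)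

lemma eq_of_mem_starLeaves (hχ : χ ≠ 0) (hz : (graphV n e).adjMatrix ℝ *ᵥ z = χ • z)
    {p q : Fin n} (hp : p ∈ starLeaves n e) (hq : q ∈ starLeaves n e) : z p = z q := by
  have hn : 1 < n := by have := mem_starLeaves.1 hp; omega
  exact mul_left_cancel₀ hχ <|
    (eigen_of_mem_starLeaves hz (u := ⟨0, by omega⟩) (v := ⟨1, hn⟩) rfl rfl hp).trans
      (eigen_of_mem_starLeaves hz rfl rfl hq).symm

lemma eq_of_mem_pendants (hχ : χ ≠ 0) (hz : (graphV n e).adjMatrix ℝ *ᵥ z = χ • z)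
    {p q : Fin n} (hp : p ∈ pendants n e) (hq : q ∈ pendants n e) : z p = z q := by
  have hn : 0 < n := by have := mem_pendants.1 hp; omega
  exact mul_left_cancel₀ hχ <|
    (eigen_of_mem_pendants hz (u := ⟨0, hn⟩) rfl hp).trans (eigen_of_mem_pendants hz rfl hq).symm

lemma quotient_eigen_equations (he : 1 ≤ e) (hn : e + 2 ≤ n) (hχ : χ ≠ 0)
    (hz : (graphV n e).adjMatrix ℝ *ᵥ z = χ • z)
    {v1 v2 v3 vn : Fin n} (h1 : (v1 : ℕ) = 0) (h2 : (v2 : ℕ) = 1) (h3 : (v3 : ℕ) = 2)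
    (hN : (vn : ℕ) = n - 1) :
    ((χ + 1) * z v1 = z v1 + z v2 + (e : ℝ) * z v3 + ((n : ℝ) - (e : ℝ) - 2) * z vn) ∧
    ((χ + 1) * z v2 = z v1 + z v2 + (e : ℝ) * z v3) ∧
    (χ * z v3 = z v1 + z v2) ∧
    (e + 2 < n → χ * z vn = z v1) := by
  have h3' : v3 ∈ starLeaves n e := mem_starLeaves.2 ⟨h3.ge, by omega⟩
  have hc p (hp : p ∈ starLeaves n e) : z p = z v3 := eq_of_mem_starLeaves hχ hz hp h3'
  have hd p (hp : p ∈ pendants n e) : z p = z vn :=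
    eq_of_mem_pendants hχ hz hp (mem_pendants.2 (by have := mem_pendants.1 hp; omega))
  refine ⟨?_, ?_, eigen_of_mem_starLeaves hz h1 h2 h3', fun hlt =>
    eigen_of_mem_pendants hz h1 (mem_pendants.2 (by omega))⟩
  · linear_combination eigen_apex hz h1 h2 hn hc hd
  · linear_combination eigen_starCenter hz h1 h2 hn hc

end graphV

theorem stmt_2_general (e n : ℕ) (he : 4 ≤ e) (hn : e + 2 ≤ n)
    (χ : ℝ)
    (z : Fin n → ℝ) (hz : ((graphV n e).adjMatrix ℝ).mulVec z = χ • z)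
    (hpos : ∀ i, 0 < z i) :
    (∀ p q : Fin n, 2 ≤ (p : ℕ) → (p : ℕ) ≤ e + 1 → 2 ≤ (q : ℕ) → (q : ℕ) ≤ e + 1 →
      z p = z q) ∧
    (∀ p q : Fin n, e + 2 ≤ (p : ℕ) → e + 2 ≤ (q : ℕ) → z p = z q) ∧
    (∀ v1 v2 v3 vn : Fin n, (v1 : ℕ) = 0 → (v2 : ℕ) = 1 → (v3 : ℕ) = 2 → (vn : ℕ) = n - 1 →
      ((χ + 1) * z v1 = z v1 + z v2 + (e : ℝ) * z v3 + ((n : ℝ) - (e : ℝ) - 2) * z vn) ∧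
      ((χ + 1) * z v2 = z v1 + z v2 + (e : ℝ) * z v3) ∧
      (χ * z v3 = z v1 + z v2) ∧
      (e + 2 < n → χ * z vn = z v1)) ∧
    IsGreatestZero (fun x : ℝ =>
      x * (x + 1) * (x ^ 2 - x - 2 * (e : ℝ))
        - ((n : ℝ) - (e : ℝ) - 2) * (x ^ 2 - (e : ℝ))) χ := by
  have hχ : χ ≠ 0 := (graphV.eigenvalue_pos (by omega) hn hz hpos).ne'
  have hrows (v1 v2 v3 vn : Fin n) :=
    graphV.quotient_eigen_equations (v1 := v1) (v2 := v2) (v3 := v3) (vn := vn) (by omega) hn hχ hz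
  refine ⟨fun p q hp₁ hp₂ hq₁ hq₂ => graphV.eq_of_mem_starLeaves hχ hz
      (graphV.mem_starLeaves.2 ⟨hp₁, hp₂⟩) (graphV.mem_starLeaves.2 ⟨hq₁, hq₂⟩),
    fun p q hp hq => graphV.eq_of_mem_pendants hχ hz
      (graphV.mem_pendants.2 hp) (graphV.mem_pendants.2 hq), hrows, ?_⟩
  obtain ⟨Ea, Eb, Ec, Ed⟩ := hrows ⟨0, by omega⟩ ⟨1, by omega⟩ ⟨2, by omega⟩ ⟨n - 1, by omega⟩
    rfl rfl rfl rfl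
  have hm : (0 : ℝ) ≤ n - e - 2 := by
    rw [sub_sub, sub_nonneg]; exact_mod_cast hn
  refine isGreatestZero_quarticV (Nat.cast_nonneg e) hm (hpos _) (hpos _) (hpos _) (hpos _)
    (by linear_combination Ea) (by linear_combination Eb) Ec fun h => Ed ?_
  rw [sub_sub, sub_pos] at h
  exact_mod_cast h

theorem stmt_2 (e n : ℕ) (he : 4 ≤ e) (hn : e + 2 ≤ n)
    (χ : ℝ) (hχ : χ = specRad (graphV n e))
    (z : Fin n → ℝ) (hz : ((graphV n e).adjMatrix ℝ).mulVec z = χ • z)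
    (hpos : ∀ i, 0 < z i) :
    (∀ p q : Fin n, 2 ≤ (p : ℕ) → (p : ℕ) ≤ e + 1 → 2 ≤ (q : ℕ) → (q : ℕ) ≤ e + 1 →
      z p = z q) ∧
    (∀ p q : Fin n, e + 2 ≤ (p : ℕ) → e + 2 ≤ (q : ℕ) → z p = z q) ∧
    (∀ v1 v2 v3 vn : Fin n, (v1 : ℕ) = 0 → (v2 : ℕ) = 1 → (v3 : ℕ) = 2 → (vn : ℕ) = n - 1 →
      ((χ + 1) * z v1 = z v1 + z v2 + (e : ℝ) * z v3 + ((n : ℝ) - (e : ℝ) - 2) * z vn) ∧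
      ((χ + 1) * z v2 = z v1 + z v2 + (e : ℝ) * z v3) ∧
      (χ * z v3 = z v1 + z v2) ∧
      (e + 2 < n → χ * z vn = z v1)) ∧
    IsGreatestZero (fun x : ℝ =>
      x * (x + 1) * (x ^ 2 - x - 2 * (e : ℝ))
        - ((n : ℝ) - (e : ℝ) - 2) * (x ^ 2 - (e : ℝ))) χ :=
  stmt_2_general e n he hn χ z hz hpos
end

section
/- Let e ≥ 4 with t_e ≥ 1 and n ≥ b_e be integers, write k = k_e, t = t_e and γ = ρ(D_{n,e}), and let y be an eigenvector of the adjacency matrix of D_{n,e} with eigenvalue γ all of whose entries are positive. Set Y_i = y_i/y_1 for i ∈ {2, k+1, k+2} and Δ = γ(γ+1)(γ-k+t+1) - t(γ(γ+2) - k + t + 1). Then Y_2 = (γ(γ+2) - k + t + 1)/Δ, Y_{k+1} = γ(γ+1)/Δ, and Y_{k+2} = (γ+1)(γ-k+t+1)/Δ. -/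
open Polynomial Matrix

attribute [local instance] Classical.propDecidable

namespace SimpleGraph

open Finset

variable {V : Type*} [Fintype V] {G : SimpleGraph V} [DecidableRel G.Adj] {y : V → ℝ} {γ : ℝ}

theorem mul_apply_eq_sum_neighborFinset (hy : G.adjMatrix ℝ *ᵥ y = γ • y) (v : V) :
    γ * y v = ∑ u ∈ G.neighborFinset v, y u := by
  rw [← adjMatrix_mulVec_apply, hy, Pi.smul_apply, smul_eq_mul]

theorem add_one_mul_apply_eq_sum_insert_neighborFinset [DecidableEq V]
    (hy : G.adjMatrix ℝ *ᵥ y = γ • y) (v : V) :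
    (γ + 1) * y v = ∑ u ∈ insert v (G.neighborFinset v), y u := by
  rw [sum_insert (by simp), ← mul_apply_eq_sum_neighborFinset hy]
  ring

theorem apply_eq_apply_of_insert_neighborFinset_eq [DecidableEq V]
    (hy : G.adjMatrix ℝ *ᵥ y = γ • y) (hγ : γ + 1 ≠ 0) {u v : V}
    (huv : insert u (G.neighborFinset u) = insert v (G.neighborFinset v)) : y u = y v := by
  have h := add_one_mul_apply_eq_sum_insert_neighborFinset hy u
  rw [huv, ← add_one_mul_apply_eq_sum_insert_neighborFinset hy v] at h
  exact mul_left_cancel₀ hγ h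

end SimpleGraph

theorem Finset.sum_Iic_eq_sum_Iic_add_sum_Ioc {α M : Type*} [LinearOrder α]
    [LocallyFiniteOrder α] [LocallyFiniteOrderBot α] [AddCommMonoid M] (f : α → M) {a b : α}
    (hab : a ≤ b) :
    ∑ i ∈ Iic b, f i = ∑ i ∈ Iic a, f i + ∑ i ∈ Ioc a b, f i := by
  rw [← sum_union (Iic_disjoint_Ioc le_rfl)]
  congr 1
  -- `Finset.Iic_union_Ioc_eq_Iic` is stated for the order's `DecidableEq`, not the ambient
  -- classical one, so compare the underlying sets instead.
  rw [← coe_inj, coe_union, coe_Iic, coe_Iic, coe_Ioc]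
  exact (Set.Iic_union_Ioc_eq_Iic hab).symm

theorem Fin.sum_Ioc_of_forall_eq {R : Type*} [NonAssocSemiring R] {n : ℕ} {f : Fin n → R}
    {a b : Fin n} {c : R} (h : ∀ i ∈ Finset.Ioc a b, f i = c) :
    ∑ i ∈ Finset.Ioc a b, f i = ((b - a : ℕ) : R) * c := by
  rw [Finset.sum_eq_card_nsmul h, Fin.card_Ioc, nsmul_eq_mul]

theorem ratios_of_quotient_eigen_equations {K : Type*} [Field K] [LinearOrder K]
    [IsStrictOrderedRing K] {γ k t a p q r Δ : K} (ha : 0 < a) (hp : 0 < p) (hq : 0 < q)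
    (hr : 0 < r) (ht : 0 ≤ t) (hr_eq : γ * r = a + t * p)
    (hq_eq : (γ + 1) * q = a + t * p + (k - t) * q)
    (hp_eq : (γ + 1) * p = a + t * p + (k - t) * q + r)
    (hΔ : Δ = γ * (γ + 1) * (γ - k + t + 1) - t * (γ * (γ + 2) - k + t + 1)) :
    p / a = (γ * (γ + 2) - k + t + 1) / Δ ∧ q / a = γ * (γ + 1) / Δ ∧
      r / a = (γ + 1) * (γ - k + t + 1) / Δ := by
  have htp : 0 < a + t * p := by positivity
  have hγ : 0 < γ := pos_of_mul_pos_left (hr_eq ▸ htp) hr.le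
  have hmq : (γ - k + t + 1) * q = a + t * p := by linear_combination hq_eq
  have hm : 0 < γ - k + t + 1 := pos_of_mul_pos_left (hmq ▸ htp) hq.le
  have hΔp : Δ * p = a * (γ * (γ + 2) - k + t + 1) := by
    linear_combination (γ * (γ - k + t + 1)) * hp_eq + (γ * (k - t)) * hmq
      + (γ - k + t + 1) * hr_eq + p * hΔ
  have hnum : 0 < γ * (γ + 2) - k + t + 1 := by nlinarith
  have hΔpos : 0 < Δ := pos_of_mul_pos_left (hΔp ▸ mul_pos ha hnum) hp.le
  have hΔq : Δ * q = a * (γ * (γ + 1)) := by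
    refine mul_left_cancel₀ hm.ne' ?_
    linear_combination Δ * hmq + t * hΔp + a * hΔ
  have hΔr : Δ * r = a * ((γ + 1) * (γ - k + t + 1)) := by
    refine mul_left_cancel₀ hγ.ne' ?_
    linear_combination Δ * hr_eq + t * hΔp + a * hΔ
  simp only [div_eq_div_iff ha.ne' hΔpos.ne']
  exact ⟨by linear_combination hΔp, by linear_combination hΔq, by linear_combination hΔr⟩

section graphD

open Finset SimpleGraph

variable {n e : ℕ}

theorem graphD_adj {i j : Fin n} : (graphD n e).Adj i j ↔ (i : ℕ) ≠ j ∧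
    ((i : ℕ) = 0 ∨ (j : ℕ) = 0 ∨ ((i : ℕ) ≤ kk e ∧ (j : ℕ) ≤ kk e) ∨
      ((i : ℕ) = kk e + 1 ∧ (j : ℕ) ≤ tt e) ∨ ((j : ℕ) = kk e + 1 ∧ (i : ℕ) ≤ tt e)) := by
  have := tt_lt_kk e
  simp only [graphD, fromRel_adj, ne_eq, Fin.val_inj]
  omega

theorem graphD_insert_neighborFinset_of_le_tt {i w : Fin n} (hi : 1 ≤ (i : ℕ))
    (hit : (i : ℕ) ≤ tt e) (hw : (w : ℕ) = kk e + 1) :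
    insert i ((graphD n e).neighborFinset i) = Iic w := by
  have := tt_lt_kk e
  ext j
  simp only [mem_insert, mem_neighborFinset, graphD_adj, mem_Iic, Fin.le_def, ← Fin.val_inj]
  omega

theorem graphD_insert_neighborFinset_of_tt_lt {i w : Fin n} (hit : tt e < (i : ℕ))
    (hik : (i : ℕ) ≤ kk e) (hw : (w : ℕ) = kk e) :
    insert i ((graphD n e).neighborFinset i) = Iic w := by
  ext j
  simp only [mem_insert, mem_neighborFinset, graphD_adj, mem_Iic, Fin.le_def, ← Fin.val_inj]
  omega

theorem graphD_neighborFinset_of_eq_kk_add_one {v w : Fin n} (hv : (v : ℕ) = kk e + 1)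
    (hw : (w : ℕ) = tt e) : (graphD n e).neighborFinset v = Iic w := by
  have := tt_lt_kk e
  ext j
  simp only [mem_neighborFinset, graphD_adj, mem_Iic, Fin.le_def]
  omega

variable {y : Fin n → ℝ} {γ : ℝ}

theorem graphD_sum_Iic_tt (hy : (graphD n e).adjMatrix ℝ *ᵥ y = γ • y) (hγ : γ + 1 ≠ 0)
    {v0 v1 vt vk1 : Fin n} (h0 : (v0 : ℕ) = 0) (h1 : (v1 : ℕ) = 1) (ht : (vt : ℕ) = tt e)
    (hk1 : (vk1 : ℕ) = kk e + 1) :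
    ∑ i ∈ Iic vt, y i = y v0 + tt e * y v1 := by
  have hIic0 : Iic v0 = {v0} := by
    ext i
    simp only [mem_Iic, mem_singleton, Fin.le_def, ← Fin.val_inj, h0, Nat.le_zero]
  have hconst : ∀ i ∈ Ioc v0 vt, y i = y v1 := by
    intro i hi
    rw [mem_Ioc, Fin.lt_def, Fin.le_def] at hi
    refine apply_eq_apply_of_insert_neighborFinset_eq hy hγ ?_
    rw [graphD_insert_neighborFinset_of_le_tt (by omega) (by omega) hk1,
      graphD_insert_neighborFinset_of_le_tt (by omega) (by omega) hk1]
  rw [sum_Iic_eq_sum_Iic_add_sum_Ioc y (Fin.le_def.mpr (by omega : (v0 : ℕ) ≤ vt)), hIic0,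
    sum_singleton, Fin.sum_Ioc_of_forall_eq hconst, h0, ht, Nat.sub_zero]

theorem graphD_sum_Iic_kk (hy : (graphD n e).adjMatrix ℝ *ᵥ y = γ • y) (hγ : γ + 1 ≠ 0)
    {vt vk : Fin n} (ht : (vt : ℕ) = tt e) (hk : (vk : ℕ) = kk e) :
    ∑ i ∈ Iic vk, y i = ∑ i ∈ Iic vt, y i + (kk e - tt e) * y vk := by
  have htk := tt_lt_kk e
  have hconst : ∀ i ∈ Ioc vt vk, y i = y vk := by
    intro i hi
    rw [mem_Ioc, Fin.lt_def, Fin.le_def] at hi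
    refine apply_eq_apply_of_insert_neighborFinset_eq hy hγ ?_
    rw [graphD_insert_neighborFinset_of_tt_lt (by omega) (by omega) hk,
      graphD_insert_neighborFinset_of_tt_lt (by omega) (by omega) hk]
  rw [sum_Iic_eq_sum_Iic_add_sum_Ioc y (Fin.le_def.mpr (by omega : (vt : ℕ) ≤ vk)),
    Fin.sum_Ioc_of_forall_eq hconst, hk, ht, Nat.cast_sub htk.le]

theorem graphD_eigen_equations (ht : 1 ≤ tt e) (hy : (graphD n e).adjMatrix ℝ *ᵥ y = γ • y)
    (hpos : ∀ i, 0 < y i) {v0 v1 vk vk1 : Fin n} (h0 : (v0 : ℕ) = 0) (h1 : (v1 : ℕ) = 1)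
    (hk : (vk : ℕ) = kk e) (hk1 : (vk1 : ℕ) = kk e + 1) :
    γ * y vk1 = y v0 + tt e * y v1 ∧
      (γ + 1) * y vk = y v0 + tt e * y v1 + (kk e - tt e) * y vk ∧
      (γ + 1) * y v1 = y v0 + tt e * y v1 + (kk e - tt e) * y vk + y vk1 := by
  have htk := tt_lt_kk e
  obtain ⟨vt, hvt⟩ : ∃ vt : Fin n, (vt : ℕ) = tt e := ⟨⟨tt e, by omega⟩, rfl⟩
  have hr : γ * y vk1 = ∑ i ∈ Iic vt, y i := by
    rw [mul_apply_eq_sum_neighborFinset hy, graphD_neighborFinset_of_eq_kk_add_one hk1 hvt]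
  have hγ : γ + 1 ≠ 0 := by
    have : 0 < γ * y vk1 := hr ▸ sum_pos (fun i _ => hpos i) ⟨vt, mem_Iic.mpr le_rfl⟩
    linarith [pos_of_mul_pos_left this (hpos vk1).le]
  have hSt := graphD_sum_Iic_tt hy hγ h0 h1 hvt hk1
  have hSk := graphD_sum_Iic_kk hy hγ hvt hk
  have hSk1 : ∑ i ∈ Iic vk1, y i = ∑ i ∈ Iic vk, y i + y vk1 := by
    rw [sum_Iic_eq_sum_Iic_add_sum_Ioc y (Fin.le_def.mpr (by omega : (vk : ℕ) ≤ vk1)),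
      Fin.sum_Ioc_of_forall_eq (c := y vk1) fun i hi => ?_, hk, hk1]
    · simp
    · rw [mem_Ioc, Fin.lt_def, Fin.le_def] at hi
      rw [Fin.ext (by omega : (i : ℕ) = vk1)]
  refine ⟨hr.trans hSt, ?_, ?_⟩
  · rw [add_one_mul_apply_eq_sum_insert_neighborFinset hy,
      graphD_insert_neighborFinset_of_tt_lt (by omega) hk.le hk, hSk, hSt]
  · rw [add_one_mul_apply_eq_sum_insert_neighborFinset hy,
      graphD_insert_neighborFinset_of_le_tt (by omega) (by omega) hk1, hSk1, hSk, hSt]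

end graphD

theorem stmt_15_general (e n : ℕ) (ht : 1 ≤ tt e)
    (γ : ℝ)
    (y : Fin n → ℝ) (hy : ((graphD n e).adjMatrix ℝ).mulVec y = γ • y)
    (hpos : ∀ i, 0 < y i)
    (Δ : ℝ) (hΔ : Δ = γ * (γ + 1) * (γ - (kk e : ℝ) + (tt e : ℝ) + 1)
      - (tt e : ℝ) * (γ * (γ + 2) - (kk e : ℝ) + (tt e : ℝ) + 1)) :
    ∀ v1 v2 vk vk1 : Fin n, (v1 : ℕ) = 0 → (v2 : ℕ) = 1 → (vk : ℕ) = kk e →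
      (vk1 : ℕ) = kk e + 1 →
      y v2 / y v1 = (γ * (γ + 2) - (kk e : ℝ) + (tt e : ℝ) + 1) / Δ ∧
      y vk / y v1 = γ * (γ + 1) / Δ ∧
      y vk1 / y v1 = (γ + 1) * (γ - (kk e : ℝ) + (tt e : ℝ) + 1) / Δ := by
  intro v1 v2 vk vk1 h1 h2 hk hk1
  obtain ⟨hr, hq, hp⟩ := graphD_eigen_equations ht hy hpos h1 h2 hk hk1
  exact ratios_of_quotient_eigen_equations (hpos _) (hpos _) (hpos _) (hpos _)
    (Nat.cast_nonneg _) hr hq hp hΔ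

theorem stmt_15 (e n : ℕ) (he : 4 ≤ e) (ht : 1 ≤ tt e) (hn : bb e ≤ n)
    (γ : ℝ) (hγ : γ = specRad (graphD n e))
    (y : Fin n → ℝ) (hy : ((graphD n e).adjMatrix ℝ).mulVec y = γ • y)
    (hpos : ∀ i, 0 < y i)
    (Δ : ℝ) (hΔ : Δ = γ * (γ + 1) * (γ - (kk e : ℝ) + (tt e : ℝ) + 1)
      - (tt e : ℝ) * (γ * (γ + 2) - (kk e : ℝ) + (tt e : ℝ) + 1)) :
    ∀ v1 v2 vk vk1 : Fin n, (v1 : ℕ) = 0 → (v2 : ℕ) = 1 → (vk : ℕ) = kk e →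
      (vk1 : ℕ) = kk e + 1 →
      y v2 / y v1 = (γ * (γ + 2) - (kk e : ℝ) + (tt e : ℝ) + 1) / Δ ∧
      y vk / y v1 = γ * (γ + 1) / Δ ∧
      y vk1 / y v1 = (γ + 1) * (γ - (kk e : ℝ) + (tt e : ℝ) + 1) / Δ :=
  stmt_15_general e n ht γ y hy hpos Δ hΔ
end
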